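/- For any normed BPA system G = (V, Act, R) and γ ∈ V*: if β ∈ V* is a silent state of the LTS L_{G,R_γ} (i.e. from β only τ-labelled transitions are reachable in L_{G,R_γ}), then βγ ~ γ in L_G, and hence β ∈ (R_γ)*. -/
import Mathlib


/-! Common definitions: labelled transition systems, branching bisimulation,
branching bisimilarity, silent states, class-change norm, BPA systems,
right-to-left finite transducers. -/

/-- A τ-path `t = t₀ →τ t₁ →τ ⋯ →τ t_k` in which every state after `t₀`
is related to `s` by `B`. -/
inductive TauSeq {S Act : Type} (tr : S → Act → S → Prop) (τ : Act)
    (B : S → S → Prop) (s : S) : S → S → Prop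
  | refl (t : S) : TauSeq tr τ B s t t
  | step {t t' t'' : S} : tr t τ t' → B s t' → TauSeq tr τ B s t' t'' →
      TauSeq tr τ B s t t''

/-- `B` is a branching bisimulation in the LTS given by `tr` with silent action `τ`. -/
def IsBranchingBisim {S Act : Type} (tr : S → Act → S → Prop) (τ : Act)
    (B : S → S → Prop) : Prop :=
  ∀ s t, B s t →
    (∀ a s', tr s a s' →
      ((a = τ ∧ B s' t) ∨
        ∃ tk t', TauSeq tr τ B s t tk ∧ tr tk a t' ∧ B s' t')) ∧
    (∀ a t', tr t a t' →
      ((a = τ ∧ B s t') ∨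
        ∃ sk s', TauSeq tr τ (fun u v => B v u) t s sk ∧ tr sk a s' ∧ B s' t'))

/-- Branching bisimilarity: `s ~ t` iff some branching bisimulation contains `(s,t)`. -/
def BBisim {S Act : Type} (tr : S → Act → S → Prop) (τ : Act) (s t : S) : Prop :=
  ∃ B, IsBranchingBisim tr τ B ∧ B s t

/-- `Steps tr s w t`: there is a path from `s` to `t` labelled by the word `w`. -/
inductive Steps {S Act : Type} (tr : S → Act → S → Prop) : S → List Act → S → Prop
  | refl (s : S) : Steps tr s [] s
  | step {s : S} {a : Act} {s' : S} {w : List Act} {t : S} :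
      tr s a s' → Steps tr s' w t → Steps tr s (a :: w) t

/-- A state is silent if only τ-labelled words can be performed from it. -/
def SilentState {S Act : Type} (tr : S → Act → S → Prop) (τ : Act) (s : S) : Prop :=
  ∀ w s', Steps tr s w s' → ∀ a ∈ w, a = τ

/-- A τ-path in which no transition is class-changing (each step stays in the same
`~`-class). -/
inductive TauNC {S Act : Type} (tr : S → Act → S → Prop) (τ : Act) : S → S → Prop
  | refl (t : S) : TauNC tr τ t t
  | step {t t' t'' : S} : tr t τ t' → BBisim tr τ t t' → TauNC tr τ t' t'' →
      TauNC tr τ t t''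

/-- `CCPath tr τ s n t`: there is a path from `s` to `t` containing exactly `n`
class-changing transitions. -/
inductive CCPath {S Act : Type} (tr : S → Act → S → Prop) (τ : Act) : S → ℕ → S → Prop
  | refl (s : S) : CCPath tr τ s 0 s
  | stepEq {s : S} {a : Act} {s' : S} {n : ℕ} {t : S} :
      tr s a s' → BBisim tr τ s s' → CCPath tr τ s' n t → CCPath tr τ s n t
  | stepNe {s : S} {a : Act} {s' : S} {n : ℕ} {t : S} :
      tr s a s' → ¬ BBisim tr τ s s' → CCPath tr τ s' n t → CCPath tr τ s (n + 1) t

/-- The class-change norm: the least number of class-changing transitions on a path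
to a silent state; `⊤` (ω) if no silent state is reachable. -/
noncomputable def ccNorm {S Act : Type} (tr : S → Act → S → Prop) (τ : Act) (s : S) : ℕ∞ :=
  sInf {n : ℕ∞ | ∃ ℓ : ℕ, n = (ℓ : ℕ∞) ∧ ∃ t, CCPath tr τ s ℓ t ∧ SilentState tr τ t}

/-- A BPA system: a finite set of rules `A →a α` (a context-free grammar in
Greibach normal form, no starting variable). -/
structure BPA (V Act : Type) where
  rules : Finset (V × Act × List V)

/-- The transition relation of the LTS `L_G` associated with a BPA system `G`:
`Aβ →a γβ` whenever `A →a γ` is a rule. -/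
def BPA.tr {V Act : Type} (G : BPA V Act) : List V → Act → List V → Prop :=
  fun s a t => ∃ (A : V) (γ β : List V), (A, a, γ) ∈ G.rules ∧ s = A :: β ∧ t = γ ++ β

/-- The (standard, syntactic) norm of a process: the length of a shortest word
leading to the empty process; `⊤` (ω) if there is none. -/
noncomputable def BPA.norm {V Act : Type} (G : BPA V Act) (α : List V) : ℕ∞ :=
  sInf {n : ℕ∞ | ∃ w : List Act, n = (w.length : ℕ∞) ∧ Steps G.tr α w []}

/-- A BPA system is normed if every variable has a finite norm. -/
def BPA.Normed {V Act : Type} (G : BPA V Act) : Prop :=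
  ∀ A : V, G.norm [A] ≠ ⊤

/-- The transition relation of `L_{G,R}`: as `L_G`, but all outgoing transitions of
states in `R*` are removed. -/
def BPA.trR {V Act : Type} (G : BPA V Act) (R : Set V) : List V → Act → List V → Prop :=
  fun s a t => G.tr s a t ∧ ¬ (∀ X ∈ s, X ∈ R)

/-- `R_γ`: the set of variables redundant w.r.t. `γ`, i.e. those `X` with `Xγ ~ γ`. -/
def RedSet {V Act : Type} (G : BPA V Act) (τ : Act) (γ : List V) : Set V :=
  {X : V | BBisim G.tr τ (X :: γ) γ}

/-- `α` is a redundancy-free prefix of `αγ`: it cannot be written as `δXβ` with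
`Xβγ ~ βγ`. -/
def RedFreePrefix {V Act : Type} (G : BPA V Act) (τ : Act) (α γ : List V) : Prop :=
  ¬ ∃ (δ : List V) (X : V) (β : List V),
      α = δ ++ X :: β ∧ BBisim G.tr τ (X :: (β ++ γ)) (β ++ γ)

/-- A finite-state transducer reading (and writing) from right to left. -/
structure Transducer (Q V : Type) where
  delta : Q → V → Q × List V
  q0 : Q

/-- Running the transducer on an input string, right to left:
`T.run α q = (q', β)` means `q' ⇐α|β= q`. -/
def Transducer.run {Q V : Type} (T : Transducer Q V) : List V → Q → Q × List V
  | [], q => (q, [])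
  | A :: α, q =>
      let p := T.run α q
      ((T.delta p.1 A).1, (T.delta p.1 A).2 ++ p.2)

/-- `T_q(α)`: the output of `T` on input `α`, started in state `q`. -/
def Transducer.out {Q V : Type} (T : Transducer Q V) (q : Q) (α : List V) : List V :=
  (T.run α q).2

/-- `q`-normal forms: `ε ∈ NF_q`, and `αA ∈ NF_q` iff `A` is a `q`-prime and
`α` is a `q'`-normal form where `q' ⇐A|A= q`. -/
inductive Transducer.NF {Q V : Type} (T : Transducer Q V) : Q → List V → Prop
  | nil (q : Q) : Transducer.NF T q []
  | snoc {q : Q} {A : V} {α : List V} :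
      (T.delta q A).2 = [A] → Transducer.NF T (T.delta q A).1 α →
      Transducer.NF T q (α ++ [A])

/-- A normal-form-computing (nfc) transducer: each `T_q(A)` is a `q`-normal form,
and `q' ⇐A|γ= q` implies `q' ⇐γ|γ= q`. -/
def Transducer.IsNFC {Q V : Type} (T : Transducer Q V) : Prop :=
  ∀ (q : Q) (A : V),
    Transducer.NF T q (T.delta q A).2 ∧ T.run (T.delta q A).2 q = T.delta q A

/-- A τ-path in `L_G` along which the `T_q`-output stays constant. -/
inductive ConstTauSeq {Q V Act : Type} (tr : List V → Act → List V → Prop) (τ : Act)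
    (T : Transducer Q V) (q : Q) : List V → List V → Prop
  | refl (α : List V) : ConstTauSeq tr τ T q α α
  | step {α α' α'' : List V} : tr α τ α' → T.out q α' = T.out q α →
      ConstTauSeq tr τ T q α' α'' → ConstTauSeq tr τ T q α α''

/-- The long move `α ⇒a_q β`. -/
def BigStep {Q V Act : Type} (G : BPA V Act) (τ : Act) (T : Transducer Q V) (q : Q)
    (α : List V) (a : Act) (β : List V) : Prop :=
  (a = τ ∧ β = T.out q α) ∨
  ∃ αk β', ConstTauSeq G.tr τ T q α αk ∧ G.tr αk a β' ∧ β = T.out q β'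

/-- The equivalence `α₁ ≈_q α₂`: the same long moves are available. -/
def TApprox {Q V Act : Type} (G : BPA V Act) (τ : Act) (T : Transducer Q V) (q : Q)
    (α₁ α₂ : List V) : Prop :=
  ∀ a β, BigStep G τ T q α₁ a β ↔ BigStep G τ T q α₂ a β

/-- Consistency of an nfc-transducer with a BPA system (Definition 4.1). -/
def ConsistentWith {Q V Act : Type} (T : Transducer Q V) (G : BPA V Act) (τ : Act) : Prop :=
  (∀ A : V, T.out T.q0 [A] = [] → TApprox G τ T T.q0 [A] []) ∧
  (∀ (q : Q) (A : V), T.out q [A] ≠ [] → TApprox G τ T q [A] (T.out q [A])) ∧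
  (∀ (q : Q) (A C : V), T.out q [A, C] = [C] → T.out q [C] = [C] →
    TApprox G τ T q [A, C] [C])

section Generic

variable {S A : Type}

/-- τ-paths. -/
inductive TPath (tr : S → A → S → Prop) (τ : A) : S → S → Prop
  | refl (s : S) : TPath tr τ s s
  | step {s s' s'' : S} : tr s τ s' → TPath tr τ s' s'' → TPath tr τ s s''

theorem TPath.trans {tr : S → A → S → Prop} {τ : A} {s t u : S}
    (h1 : TPath tr τ s t) (h2 : TPath tr τ t u) : TPath tr τ s u := by
  induction h1 with
  | refl => exact h2
  | step h _ ih => exact TPath.step h (ih h2)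

theorem tpath_snoc {tr : S → A → S → Prop} {τ : A} {s t : S} (h : TPath tr τ s t) :
    s = t ∨ ∃ u, TPath tr τ s u ∧ tr u τ t := by
  induction h with
  | refl => exact Or.inl rfl
  | step h _ ih =>
    rcases ih with rfl | ⟨u, hu, hut⟩
    · exact Or.inr ⟨_, TPath.refl _, h⟩
    · exact Or.inr ⟨u, TPath.step h hu, hut⟩

theorem TauSeq.mono {tr : S → A → S → Prop} {τ : A} {B B' : S → S → Prop}
    {s t u : S} (h : TauSeq tr τ B s t u) (hsub : ∀ x y, B x y → B' x y) :
    TauSeq tr τ B' s t u := by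
  induction h with
  | refl t => exact .refl t
  | step h1 h2 _ ih => exact .step h1 (hsub _ _ h2) ih

theorem TauSeq.trans {tr : S → A → S → Prop} {τ : A} {B : S → S → Prop} {s t u v : S}
    (h1 : TauSeq tr τ B s t u) : TauSeq tr τ B s u v → TauSeq tr τ B s t v := by
  induction h1 with
  | refl t => exact id
  | step h hb _ ih => exact fun h2 => .step h hb (ih h2)

theorem TauSeq.toTPath {tr : S → A → S → Prop} {τ : A} {B : S → S → Prop} {s t u : S}
    (h : TauSeq tr τ B s t u) : TPath tr τ t u := by
  induction h with
  | refl t => exact .refl t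
  | step h _ _ ih => exact .step h ih

theorem TauSeq.last {tr : S → A → S → Prop} {τ : A} {B : S → S → Prop} {s t u : S}
    (h : TauSeq tr τ B s t u) : u = t ∨ B s u := by
  induction h with
  | refl => exact Or.inl rfl
  | step h hb _ ih =>
    rcases ih with rfl | h4
    · exact Or.inr hb
    · exact Or.inr h4

/-- Semi-branching bisimulation (Basten). -/
def IsSemiBB (tr : S → A → S → Prop) (τ : A) (B : S → S → Prop) : Prop :=
  ∀ s t, B s t →
    (∀ a s', tr s a s' → ∃ t1, TPath tr τ t t1 ∧ B s t1 ∧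
      ((a = τ ∧ B s' t1) ∨ ∃ t', tr t1 a t' ∧ B s' t')) ∧
    (∀ a t', tr t a t' → ∃ s1, TPath tr τ s s1 ∧ B s1 t ∧
      ((a = τ ∧ B s1 t') ∨ ∃ s', tr s1 a s' ∧ B s' t'))

/-- Semi-branching bisimilarity. -/
def SB (tr : S → A → S → Prop) (τ : A) (s t : S) : Prop :=
  ∃ B, IsSemiBB tr τ B ∧ B s t

theorem IsBranchingBisim.toSemi {tr : S → A → S → Prop} {τ : A} {B : S → S → Prop}
    (h : IsBranchingBisim tr τ B) : IsSemiBB tr τ B := by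
  intro s t hst
  obtain ⟨h1, h2⟩ := h s t hst
  constructor
  · intro a s' htr
    rcases h1 a s' htr with ⟨rfl, hb⟩ | ⟨tk, t', hseq, htk, hb⟩
    · exact ⟨t, .refl t, hst, Or.inl ⟨rfl, hb⟩⟩
    · refine ⟨tk, hseq.toTPath, ?_, Or.inr ⟨t', htk, hb⟩⟩
      rcases hseq.last with rfl | hx
      · exact hst
      · exact hx
  · intro a t' htr
    rcases h2 a t' htr with ⟨rfl, hb⟩ | ⟨sk, s', hseq, hsk, hb⟩
    · exact ⟨s, .refl s, hst, Or.inl ⟨rfl, hb⟩⟩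
    · refine ⟨sk, hseq.toTPath, ?_, Or.inr ⟨s', hsk, hb⟩⟩
      rcases hseq.last with rfl | hx
      · exact hst
      · exact hx

theorem sb_semi {tr : S → A → S → Prop} {τ : A} : IsSemiBB tr τ (SB tr τ) := by
  rintro s t ⟨B, hB, hst⟩
  obtain ⟨h1, h2⟩ := hB s t hst
  constructor
  · intro a s' htr
    obtain ⟨t1, hp, hb1, hd⟩ := h1 a s' htr
    refine ⟨t1, hp, ⟨B, hB, hb1⟩, ?_⟩
    rcases hd with ⟨ha, hb⟩ | ⟨t', ht', hb⟩
    · exact Or.inl ⟨ha, B, hB, hb⟩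
    · exact Or.inr ⟨t', ht', B, hB, hb⟩
  · intro a t' htr
    obtain ⟨s1, hp, hb1, hd⟩ := h2 a t' htr
    refine ⟨s1, hp, ⟨B, hB, hb1⟩, ?_⟩
    rcases hd with ⟨ha, hb⟩ | ⟨s', hs', hb⟩
    · exact Or.inl ⟨ha, B, hB, hb⟩
    · exact Or.inr ⟨s', hs', B, hB, hb⟩

theorem eq_semi {tr : S → A → S → Prop} {τ : A} : IsSemiBB tr τ (Eq : S → S → Prop) := by
  rintro s t rfl
  exact ⟨fun a s' h => ⟨s, .refl s, rfl, Or.inr ⟨s', h, rfl⟩⟩,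
         fun a t' h => ⟨s, .refl s, rfl, Or.inr ⟨t', h, rfl⟩⟩⟩

theorem sb_refl {tr : S → A → S → Prop} {τ : A} (s : S) : SB tr τ s s :=
  ⟨Eq, eq_semi, rfl⟩

theorem IsSemiBB.flip {tr : S → A → S → Prop} {τ : A} {B : S → S → Prop}
    (h : IsSemiBB tr τ B) : IsSemiBB tr τ (fun x y => B y x) := by
  intro s t hts
  obtain ⟨h1, h2⟩ := h t s hts
  exact ⟨h2, h1⟩

theorem sb_symm {tr : S → A → S → Prop} {τ : A} {s t : S} (h : SB tr τ s t) :
    SB tr τ t s := by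
  obtain ⟨B, hB, hb⟩ := h
  exact ⟨fun x y => B y x, hB.flip, hb⟩

theorem IsSemiBB.evolve {tr : S → A → S → Prop} {τ : A} {B : S → S → Prop}
    (hB : IsSemiBB tr τ B) {u v : S} (hp : TPath tr τ u v) :
    ∀ {t : S}, B u t → ∃ w, TPath tr τ t w ∧ B v w := by
  induction hp with
  | refl u => exact fun h => ⟨_, .refl _, h⟩
  | step h _ ih =>
    intro t hut
    obtain ⟨t1, hp1, _, hd⟩ := (hB _ _ hut).1 _ _ h
    rcases hd with ⟨_, hb⟩ | ⟨t', ht', hb⟩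
    · obtain ⟨w, hp2, hb2⟩ := ih hb
      exact ⟨w, hp1.trans hp2, hb2⟩
    · obtain ⟨w, hp2, hb2⟩ := ih hb
      exact ⟨w, (hp1.trans (TPath.step ht' (TPath.refl _))).trans hp2, hb2⟩

theorem semi_comp_c1 {tr : S → A → S → Prop} {τ : A} {B1 B2 : S → S → Prop}
    (h1 : IsSemiBB tr τ B1) (h2 : IsSemiBB tr τ B2)
    {s u t : S} (hsu : B1 s u) (hut : B2 u t) :
    ∀ a s', tr s a s' → ∃ t1, TPath tr τ t t1 ∧ (∃ v, B1 s v ∧ B2 v t1) ∧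
      ((a = τ ∧ ∃ v, B1 s' v ∧ B2 v t1) ∨ ∃ t', tr t1 a t' ∧ ∃ v, B1 s' v ∧ B2 v t') := by
  intro a s' htr
  obtain ⟨u1, hpu, hbu, hd⟩ := (h1 s u hsu).1 a s' htr
  obtain ⟨t0, hpt0, hbt0⟩ := h2.evolve hpu hut
  rcases hd with ⟨ha, hb⟩ | ⟨u', hu', hb⟩
  · exact ⟨t0, hpt0, ⟨u1, hbu, hbt0⟩, Or.inl ⟨ha, u1, hb, hbt0⟩⟩
  · obtain ⟨t1, hpt1, hbt1, hd2⟩ := (h2 u1 t0 hbt0).1 a u' hu'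
    rcases hd2 with ⟨ha, hb2⟩ | ⟨t', ht', hb2⟩
    · exact ⟨t1, hpt0.trans hpt1, ⟨u1, hbu, hbt1⟩, Or.inl ⟨ha, u', hb, hb2⟩⟩
    · exact ⟨t1, hpt0.trans hpt1, ⟨u1, hbu, hbt1⟩, Or.inr ⟨t', ht', u', hb, hb2⟩⟩

theorem semi_comp {tr : S → A → S → Prop} {τ : A} {B1 B2 : S → S → Prop}
    (h1 : IsSemiBB tr τ B1) (h2 : IsSemiBB tr τ B2) :
    IsSemiBB tr τ (fun s t => ∃ u, B1 s u ∧ B2 u t) := by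
  rintro s t ⟨u, hsu, hut⟩
  constructor
  · exact semi_comp_c1 h1 h2 hsu hut
  · intro a t' htr
    obtain ⟨s1, hps, hb, hd⟩ := semi_comp_c1 h2.flip h1.flip hut hsu a t' htr
    obtain ⟨v, hv2, hv1⟩ := hb
    refine ⟨s1, hps, ⟨v, hv1, hv2⟩, ?_⟩
    rcases hd with ⟨ha, w, hw2, hw1⟩ | ⟨s', hs', w, hw2, hw1⟩
    · exact Or.inl ⟨ha, w, hw1, hw2⟩
    · exact Or.inr ⟨s', hs', w, hw1, hw2⟩

theorem sb_trans {tr : S → A → S → Prop} {τ : A} {s t u : S}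
    (h1 : SB tr τ s t) (h2 : SB tr τ t u) : SB tr τ s u := by
  obtain ⟨B1, hB1, hb1⟩ := h1
  obtain ⟨B2, hB2, hb2⟩ := h2
  exact ⟨_, semi_comp hB1 hB2, t, hb1, hb2⟩

theorem sb_evolve_flip {tr : S → A → S → Prop} {τ : A} {s t u : S}
    (hst : SB tr τ s t) (hp : TPath tr τ t u) :
    ∃ v, TPath tr τ s v ∧ SB tr τ v u := by
  obtain ⟨w, hpw, hw⟩ := (sb_semi (tr := tr) (τ := τ)).evolve hp (sb_symm hst)
  exact ⟨w, hpw, sb_symm hw⟩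

theorem sb_mid {tr : S → A → S → Prop} {τ : A} {s t u v : S}
    (hst : SB tr τ s t) (h1 : TPath tr τ t u) (h2 : TPath tr τ u v)
    (hsv : SB tr τ s v) : SB tr τ s u := by
  refine ⟨fun p q => SB tr τ p q ∨
      ∃ x y, SB tr τ p x ∧ TPath tr τ x q ∧ TPath tr τ q y ∧ SB tr τ p y,
    ?_, Or.inr ⟨t, v, hst, h1, h2, hsv⟩⟩
  rintro p q (hpq | ⟨x, y, hpx, hxq, hqy, hpy⟩)
  · obtain ⟨c1, c2⟩ := sb_semi p q hpq
    constructor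
    · intro a s' htr
      obtain ⟨t1, hp, hb, hd⟩ := c1 a s' htr
      refine ⟨t1, hp, Or.inl hb, ?_⟩
      rcases hd with ⟨ha, hb2⟩ | ⟨t', ht', hb2⟩
      · exact Or.inl ⟨ha, Or.inl hb2⟩
      · exact Or.inr ⟨t', ht', Or.inl hb2⟩
    · intro a t' htr
      obtain ⟨s1, hp, hb, hd⟩ := c2 a t' htr
      refine ⟨s1, hp, Or.inl hb, ?_⟩
      rcases hd with ⟨ha, hb2⟩ | ⟨s', hs', hb2⟩
      · exact Or.inl ⟨ha, Or.inl hb2⟩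
      · exact Or.inr ⟨s', hs', Or.inl hb2⟩
  · constructor
    · intro a s' htr
      obtain ⟨w, hpw, hbw, hd⟩ := (sb_semi p y hpy).1 a s' htr
      refine ⟨w, hqy.trans hpw, Or.inl hbw, ?_⟩
      rcases hd with ⟨ha, hb2⟩ | ⟨t', ht', hb2⟩
      · exact Or.inl ⟨ha, Or.inl hb2⟩
      · exact Or.inr ⟨t', ht', Or.inl hb2⟩
    · intro a q' htr
      obtain ⟨w, hpw, hwq⟩ := sb_evolve_flip hpx hxq
      obtain ⟨s1, hp1, hb1, hd⟩ := (sb_semi w q hwq).2 a q' htr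
      refine ⟨s1, hpw.trans hp1, Or.inl hb1, ?_⟩
      rcases hd with ⟨ha, hb2⟩ | ⟨s', hs', hb2⟩
      · exact Or.inl ⟨ha, Or.inl hb2⟩
      · exact Or.inr ⟨s', hs', Or.inl hb2⟩

theorem sb_tauseq {tr : S → A → S → Prop} {τ : A} {s : S} :
    ∀ {t v : S}, TPath tr τ t v → SB tr τ s t → SB tr τ s v →
      TauSeq tr τ (SB tr τ) s t v := by
  intro t v hp
  induction hp with
  | refl => exact fun _ _ => .refl _
  | step h p ih =>
    intro hst hsv
    have h1 := sb_mid hst (TPath.step h (.refl _)) p hsv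
    exact .step h h1 (ih h1 hsv)

theorem sb_tauseq_mid {tr : S → A → S → Prop} {τ : A} {s v : S} :
    ∀ {t u : S}, TPath tr τ t u → tr u τ v → SB tr τ s t → SB tr τ s v →
      TauSeq tr τ (SB tr τ) s t u := by
  intro t u hp
  induction hp with
  | refl => exact fun _ _ _ => .refl _
  | step h p ih =>
    intro hlast hst hsv
    have h1 := sb_mid hst (TPath.step h (.refl _))
      (p.trans (TPath.step hlast (.refl _))) hsv
    exact .step h h1 (ih hlast h1 hsv)

theorem sb_branching {tr : S → A → S → Prop} {τ : A} :
    IsBranchingBisim tr τ (SB tr τ) := by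
  intro s t hst
  constructor
  · intro a s' htr
    obtain ⟨t1, hp, hb, hd⟩ := (sb_semi s t hst).1 a s' htr
    rcases hd with ⟨rfl, hb2⟩ | ⟨t', ht', hb2⟩
    · rcases tpath_snoc hp with heq | ⟨u, hpu, hut⟩
      · exact Or.inl ⟨rfl, heq ▸ hb2⟩
      · exact Or.inr ⟨u, t1, sb_tauseq_mid hpu hut hst hb, hut, hb2⟩
    · exact Or.inr ⟨t1, t', sb_tauseq hp hst hb, ht', hb2⟩
  · intro a t' htr
    obtain ⟨s1, hp, hb, hd⟩ := (sb_semi s t hst).2 a t' htr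
    rcases hd with ⟨rfl, hb2⟩ | ⟨s', hs', hb2⟩
    · rcases tpath_snoc hp with heq | ⟨u, hpu, hut⟩
      · exact Or.inl ⟨rfl, heq ▸ hb2⟩
      · refine Or.inr ⟨u, s1, ?_, hut, hb2⟩
        exact (sb_tauseq_mid hpu hut (sb_symm hst) (sb_symm hb)).mono
          (fun x y hh => sb_symm hh)
    · refine Or.inr ⟨s1, s', ?_, hs', hb2⟩
      exact (sb_tauseq hp (sb_symm hst) (sb_symm hb)).mono (fun x y hh => sb_symm hh)

theorem bb_clauses_of_sub {tr : S → A → S → Prop} {τ : A} {B B' : S → S → Prop}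
    (hB' : IsBranchingBisim tr τ B') (hsub : ∀ x y, B' x y → B x y) {s t : S}
    (h : B' s t) :
    (∀ a s', tr s a s' →
      ((a = τ ∧ B s' t) ∨ ∃ tk t', TauSeq tr τ B s t tk ∧ tr tk a t' ∧ B s' t')) ∧
    (∀ a t', tr t a t' →
      ((a = τ ∧ B s t') ∨
        ∃ sk s', TauSeq tr τ (fun u v => B v u) t s sk ∧ tr sk a s' ∧ B s' t')) := by
  obtain ⟨c1, c2⟩ := hB' s t h
  constructor
  · intro a s' htr
    rcases c1 a s' htr with ⟨ha, hb⟩ | ⟨tk, t', hseq, htk, hb⟩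
    · exact Or.inl ⟨ha, hsub _ _ hb⟩
    · exact Or.inr ⟨tk, t', hseq.mono hsub, htk, hsub _ _ hb⟩
  · intro a t' htr
    rcases c2 a t' htr with ⟨ha, hb⟩ | ⟨sk, s', hseq, hsk, hb⟩
    · exact Or.inl ⟨ha, hsub _ _ hb⟩
    · exact Or.inr ⟨sk, s', hseq.mono (fun x y hh => hsub y x hh), hsk, hsub _ _ hb⟩

end Generic

section BPAPart

variable {V Act : Type}

theorem bpa_tr_append (G : BPA V Act) {s t : List V} {a : Act}
    (h : G.tr s a t) (ρ : List V) : G.tr (s ++ ρ) a (t ++ ρ) := by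
  obtain ⟨A, χ, β, hr, rfl, rfl⟩ := h
  exact ⟨A, χ, β ++ ρ, hr, by simp, by simp⟩

theorem Steps.trans' {S A : Type} {tr : S → A → S → Prop} {s t u : S} {w w' : List A}
    (h1 : Steps tr s w t) : Steps tr t w' u → Steps tr s (w ++ w') u := by
  induction h1 with
  | refl => exact id
  | step h _ ih => exact fun h2 => .step h (ih h2)

theorem steps_append (G : BPA V Act) {s t : List V} {w : List Act}
    (h : Steps G.tr s w t) (ρ : List V) : Steps G.tr (s ++ ρ) w (t ++ ρ) := by
  induction h with
  | refl => exact .refl _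
  | step h _ ih => exact .step (bpa_tr_append G h ρ) ih

theorem exists_word (G : BPA V Act) (hG : G.Normed) :
    ∀ δ : List V, ∃ w : List Act, Steps G.tr δ w [] := by
  intro δ
  induction δ with
  | nil => exact ⟨[], .refl []⟩
  | cons X δ ih =>
    obtain ⟨w2, hw2⟩ := ih
    have hA : ∃ w : List Act, Steps G.tr [X] w [] := by
      by_contra hc
      apply hG X
      have he : {n : ℕ∞ | ∃ w : List Act, n = (w.length : ℕ∞) ∧ Steps G.tr [X] w []}
          = ∅ := by
        ext n
        simp only [Set.mem_setOf_eq, Set.mem_empty_iff_false, iff_false, not_exists]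
        rintro w ⟨_, hw⟩
        exact hc ⟨w, hw⟩
      simp [BPA.norm, he]
    obtain ⟨w1, hw1⟩ := hA
    have h1 : Steps G.tr (X :: δ) w1 δ := by
      have := steps_append G hw1 δ
      simpa using this
    exact ⟨w1 ++ w2, h1.trans' hw2⟩

theorem silent_of_mem (G : BPA V Act) (τ : Act) {R : Set V} {s : List V}
    (h : ∀ X ∈ s, X ∈ R) : SilentState (G.trR R) τ s := by
  intro w s' hsteps a ha
  cases hsteps with
  | refl => simp at ha
  | step h1 _ => exact (h1.2 h).elim

theorem silent_step {S A : Type} {T : S → A → S → Prop} {τ : A} {s s' : S} {a : A}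
    (h : SilentState T τ s) (ht : T s a s') : a = τ ∧ SilentState T τ s' := by
  constructor
  · exact h [a] s' (.step ht (.refl s')) a (by simp)
  · intro w u hw b hb
    exact h (a :: w) u (.step ht hw) b (by simp [hb])

/-- A τ-path in `L_G` all of whose states (after the first) are silent in `L_{G,R}`. -/
inductive SilPath (G : BPA V Act) (τ : Act) (R : Set V) : List V → List V → Prop
  | refl (δ : List V) : SilPath G τ R δ δ
  | step {δ δ' ρ : List V} : G.tr δ τ δ' → SilentState (G.trR R) τ δ' →
      SilPath G τ R δ' ρ → SilPath G τ R δ ρ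

theorem exists_silpath (G : BPA V Act) (τ : Act) {R : Set V} :
    ∀ (w : List Act) (δ : List V), Steps G.tr δ w [] →
      SilentState (G.trR R) τ δ → ∃ ρ, (∀ X ∈ ρ, X ∈ R) ∧ SilPath G τ R δ ρ := by
  intro w
  induction w with
  | nil =>
    intro δ h _
    cases h
    exact ⟨[], by simp, .refl []⟩
  | cons a w ih =>
    intro δ h hsil
    by_cases hR : ∀ X ∈ δ, X ∈ R
    · exact ⟨δ, hR, .refl δ⟩
    · cases h with
      | step h1 h2 =>
        obtain ⟨ha, hsil'⟩ := silent_step hsil ⟨h1, hR⟩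
        subst ha
        obtain ⟨ρ, hρ, hp⟩ := ih _ h2 hsil'
        exact ⟨ρ, hρ, .step h1 hsil' hp⟩

theorem silent_suffix (G : BPA V Act) (τ : Act) {R : Set V} {β : List V} :
    ∀ (w : List Act) (ξ : List V), Steps G.tr ξ w [] →
      SilentState (G.trR R) τ (ξ ++ β) → SilentState (G.trR R) τ β := by
  intro w
  induction w with
  | nil =>
    intro ξ h hs
    cases h
    exact hs
  | cons a w ih =>
    intro ξ h hs
    by_cases hR : ∀ X ∈ ξ ++ β, X ∈ R
    · exact silent_of_mem G τ (fun X hX => hR X (by simp [hX]))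
    · cases h with
      | step h1 h2 =>
        obtain ⟨_, hs'⟩ := silent_step hs ⟨bpa_tr_append G h1 β, hR⟩
        exact ih _ h2 hs'

/-- The congruence relation: `αδ` vs `αδ'` for `δ ~ δ'`. -/
def Crel (G : BPA V Act) (τ : Act) : List V → List V → Prop :=
  fun p q => ∃ (α x y : List V), SB G.tr τ x y ∧ p = α ++ x ∧ q = α ++ y

theorem crel_branching (G : BPA V Act) (τ : Act) :
    IsBranchingBisim G.tr τ (Crel G τ) := by
  have hsub : ∀ x y, SB G.tr τ x y → Crel G τ x y :=
    fun x y hh => ⟨[], x, y, hh, rfl, rfl⟩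
  rintro p q ⟨α, x, y, hxy, rfl, rfl⟩
  cases α with
  | nil => exact bb_clauses_of_sub sb_branching hsub hxy
  | cons D α₂ =>
    constructor
    · intro a s' htr
      obtain ⟨A, χ, β, hrule, heq, rfl⟩ := htr
      rw [List.cons_append] at heq
      obtain ⟨rfl, rfl⟩ : D = A ∧ α₂ ++ x = β := by
        injection heq with h1 h2; exact ⟨h1, h2⟩
      refine Or.inr ⟨(D :: α₂) ++ y, χ ++ (α₂ ++ y), .refl _,
        ⟨D, χ, α₂ ++ y, hrule, by simp, rfl⟩, ?_⟩
      exact ⟨χ ++ α₂, x, y, hxy, (List.append_assoc χ α₂ x).symm,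
        (List.append_assoc χ α₂ y).symm⟩
    · intro a t' htr
      obtain ⟨A, χ, β, hrule, heq, rfl⟩ := htr
      rw [List.cons_append] at heq
      obtain ⟨rfl, rfl⟩ : D = A ∧ α₂ ++ y = β := by
        injection heq with h1 h2; exact ⟨h1, h2⟩
      refine Or.inr ⟨(D :: α₂) ++ x, χ ++ (α₂ ++ x), .refl _,
        ⟨D, χ, α₂ ++ x, hrule, by simp, rfl⟩, ?_⟩
      exact ⟨χ ++ α₂, x, y, hxy, (List.append_assoc χ α₂ x).symm,
        (List.append_assoc χ α₂ y).symm⟩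

theorem sb_congr (G : BPA V Act) (τ : Act) {δ δ' : List V}
    (h : SB G.tr τ δ δ') (α : List V) : SB G.tr τ (α ++ δ) (α ++ δ') :=
  ⟨Crel G τ, (crel_branching G τ).toSemi, α, δ, δ', h, rfl, rfl⟩

theorem sb_redstar (G : BPA V Act) (τ : Act) {γ ρ : List V}
    (h : ∀ X ∈ ρ, X ∈ RedSet G τ γ) : SB G.tr τ (ρ ++ γ) γ := by
  induction ρ with
  | nil => exact sb_refl γ
  | cons X ρ ih =>
    have hX : SB G.tr τ (X :: γ) γ := by
      obtain ⟨B, hB, hb⟩ := h X (by simp)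
      exact ⟨B, hB.toSemi, hb⟩
    have h2 : SB G.tr τ (ρ ++ γ) γ := ih (fun Y hY => h Y (by simp [hY]))
    have h3 : SB G.tr τ (X :: (ρ ++ γ)) (X :: γ) := sb_congr G τ h2 [X]
    exact sb_trans h3 hX

/-- The main branching bisimulation witnessing statement 17. -/
def MainB (G : BPA V Act) (τ : Act) (γ : List V) : List V → List V → Prop :=
  fun s t => SB G.tr τ s t ∨
    ∃ δ, SilentState (G.trR (RedSet G τ γ)) τ δ ∧ SB G.tr τ γ t ∧ s = δ ++ γ

theorem silpath_tauseq (G : BPA V Act) (τ : Act) {γ t : List V}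
    (hγt : SB G.tr τ γ t) {δ ρ : List V} (hp : SilPath G τ (RedSet G τ γ) δ ρ) :
    TauSeq G.tr τ (fun u v => MainB G τ γ v u) t (δ ++ γ) (ρ ++ γ) := by
  induction hp with
  | refl => exact .refl _
  | step h1 h2 _ ih =>
    exact .step (bpa_tr_append G h1 γ) (Or.inr ⟨_, h2, hγt, rfl⟩) ih

theorem mainb_branching (G : BPA V Act) (τ : Act) (hG : G.Normed) (γ : List V) :
    IsBranchingBisim G.tr τ (MainB G τ γ) := by
  have hsub : ∀ x y, SB G.tr τ x y → MainB G τ γ x y := fun x y hh => Or.inl hh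
  rintro s t (hst | ⟨δ, hsil, hγt, rfl⟩)
  · exact bb_clauses_of_sub sb_branching hsub hst
  · by_cases hR : ∀ X ∈ δ, X ∈ RedSet G τ γ
    · exact bb_clauses_of_sub sb_branching hsub
        (sb_trans (sb_redstar G τ hR) hγt)
    · constructor
      · intro a s' htr
        obtain ⟨A, χ, β, hrule, heq, rfl⟩ := htr
        cases δ with
        | nil => exact absurd (by simp) hR
        | cons D δ₂ =>
          rw [List.cons_append] at heq
          obtain ⟨rfl, rfl⟩ : D = A ∧ δ₂ ++ γ = β := by
            injection heq with h1 h2; exact ⟨h1, h2⟩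
          have hstep : G.trR (RedSet G τ γ) (D :: δ₂) a (χ ++ δ₂) :=
            ⟨⟨D, χ, δ₂, hrule, rfl, rfl⟩, hR⟩
          obtain ⟨ha, hsil'⟩ := silent_step hsil hstep
          exact Or.inl ⟨ha, Or.inr ⟨χ ++ δ₂, hsil', hγt,
            (List.append_assoc χ δ₂ γ).symm⟩⟩
      · intro a t' htr
        obtain ⟨w, hw⟩ := exists_word G hG δ
        obtain ⟨ρ, hρ, hpath⟩ := exists_silpath G τ w δ hw hsil
        have hρt : SB G.tr τ (ρ ++ γ) t := sb_trans (sb_redstar G τ hρ) hγt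
        rcases (sb_branching (ρ ++ γ) t hρt).2 a t' htr with
          ⟨ha, hb⟩ | ⟨sk, s', hseq, hsk, hb⟩
        · exact Or.inl ⟨ha, Or.inr ⟨δ, hsil,
            sb_trans (sb_symm (sb_redstar G τ hρ)) hb, rfl⟩⟩
        · refine Or.inr ⟨sk, s', ?_, hsk, hsub _ _ hb⟩
          exact (silpath_tauseq G τ hγt hpath).trans
            (hseq.mono (fun x y hh => hsub y x hh))

theorem sb_main (G : BPA V Act) (τ : Act) (hG : G.Normed) (γ : List V)
    {β : List V} (h : SilentState (G.trR (RedSet G τ γ)) τ β) :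
    SB G.tr τ (β ++ γ) γ :=
  ⟨MainB G τ γ, (mainb_branching G τ hG γ).toSemi,
    Or.inr ⟨β, h, sb_refl γ, rfl⟩⟩

theorem silent_mem_red (G : BPA V Act) (τ : Act) (hG : G.Normed) (γ : List V) :
    ∀ β : List V, SilentState (G.trR (RedSet G τ γ)) τ β →
      ∀ X ∈ β, X ∈ RedSet G τ γ := by
  intro β
  induction β with
  | nil => intro _ X hX; simp at hX
  | cons X β₂ ih =>
    intro h
    have hβ₂ : SilentState (G.trR (RedSet G τ γ)) τ β₂ := by
      obtain ⟨w, hw⟩ := exists_word G hG [X]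
      exact silent_suffix G τ w [X] hw h
    have hmain2 : SB G.tr τ (β₂ ++ γ) γ := sb_main G τ hG γ hβ₂
    have hmain1 : SB G.tr τ (X :: (β₂ ++ γ)) γ := sb_main G τ hG γ h
    have hXγ : SB G.tr τ (X :: γ) γ := by
      have h1 : SB G.tr τ (X :: (β₂ ++ γ)) (X :: γ) := sb_congr G τ hmain2 [X]
      exact sb_trans (sb_symm h1) hmain1
    intro Y hY
    rcases List.mem_cons.mp hY with rfl | hY2
    · exact ⟨SB G.tr τ, sb_branching, hXγ⟩
    · exact ih hβ₂ Y hY2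

end BPAPart

/-- if `β` is a silent state of `L_{G,R_γ}`, then `βγ ~ γ` in `L_G`,
and hence `β ∈ (R_γ)*`. -/
theorem silent_in_relative_lts_redundant {V Act : Type} (G : BPA V Act) (τ : Act)
    (hG : G.Normed) (γ β : List V)
    (h : SilentState (G.trR (RedSet G τ γ)) τ β) :
    BBisim G.tr τ (β ++ γ) γ ∧ ∀ X ∈ β, X ∈ RedSet G τ γ := by
  exact ⟨⟨MainB G τ γ, mainb_branching G τ hG γ, Or.inr ⟨β, h, sb_refl γ, rfl⟩⟩,
    silent_mem_red G τ hG γ β h⟩
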